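/- Let S₁, S₂, ..., S_{N−1} be μ-measurable maps from Ω to Ω. The following statements are equivalent: (1) ∫_Ω H(x, S₁x, S₂x, ..., S_{N−1}x) dμ(x) = 0 for every H ∈ H_N(Ω); (2) there exists a μ-measure-preserving map S : Ω → Ω such that S^N = Id μ-a.e. and S_i = S^i μ-a.e. for every i = 1, ..., N−1. -/
import Mathlib


/- STATEMENT 6: Lemma 2.6 (duality between antisymmetric Hamiltonians and
measure-preserving N-involutions).  Paper's `N` is formalized as `N + 1` (so `N ≥ 2`
becomes `1 ≤ N`).  The maps `S₁,…,S_{N−1}` are encoded as `S : Fin (N+1) → Euc d → Euc d`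
with `S 0 = id`, so that `(x, S₁x, …, S_{N−1}x) = fun i => S i x`. -/

open MeasureTheory Filter Set Function
open scoped RealInnerProductSpace Topology ENNReal NNReal BoundedContinuousFunction

noncomputable section

abbrev Euc (d : ℕ) : Type := EuclideanSpace ℝ (Fin d)

/-- The cyclic shift `σ(x₁,…,x_N) = (x₂,…,x_N,x₁)`. -/
def cyc {n : ℕ} {α : Type*} (x : Fin n → α) : Fin n → α :=
  fun i => x ⟨(i.1 + 1) % n, Nat.mod_lt _ i.pos⟩

/-- `H ∈ H_N(Ω)`. -/
def memHN {d N : ℕ} (Ω : Set (Euc d)) (H : (Fin N → Euc d) → ℝ) : Prop :=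
  ContinuousOn H {x | ∀ i, x i ∈ Ω} ∧
    ∀ x : Fin N → Euc d, (∀ i, x i ∈ Ω) → ∑ i : Fin N, H (cyc^[i.1] x) = 0

lemma cyc_iterate {n : ℕ} {α : Type*} : ∀ (k : ℕ) (x : Fin n → α) (i : Fin n),
    (cyc^[k] x) i = x ⟨(i.1 + k) % n, Nat.mod_lt _ i.pos⟩
  | 0, x, i => by simp [Nat.mod_eq_of_lt i.2]
  | (k+1), x, i => by
      rw [Function.iterate_succ_apply, cyc_iterate k (cyc x) i]
      show x _ = x _
      congr 1
      apply Fin.ext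
      show ((i.1 + k) % n + 1) % n = (i.1 + (k + 1)) % n
      rw [Nat.mod_add_mod, Nat.add_assoc]

lemma cyc_iterate_self {n : ℕ} {α : Type*} (x : Fin n → α) : cyc^[n] x = x := by
  funext i
  rw [cyc_iterate]
  congr 1
  apply Fin.ext
  show (i.1 + n) % n = i.1
  rw [Nat.add_mod_right, Nat.mod_eq_of_lt i.2]

lemma cyc_continuous {n : ℕ} {α : Type*} [TopologicalSpace α] :
    Continuous (cyc : (Fin n → α) → (Fin n → α)) :=
  continuous_pi fun _ => continuous_apply _

lemma cyc_measurable {n : ℕ} {α : Type*} [MeasurableSpace α] :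
    Measurable (cyc : (Fin n → α) → (Fin n → α)) :=
  measurable_pi_lambda _ fun _ => measurable_pi_apply _

def BCFreal {X : Type*} [TopologicalSpace X] (f : X →ᵇ ℝ≥0) : X →ᵇ ℝ :=
  BoundedContinuousFunction.ofNormedAddCommGroup (fun x => (f x : ℝ))
    (NNReal.continuous_coe.comp f.continuous) (nndist 0 f)
    (fun x => by
      have := f.apply_le_nndist_zero x
      rw [Real.norm_eq_abs, abs_of_nonneg (f x).coe_nonneg]
      exact_mod_cast this)

lemma aemeasurable_pi {ι : Type*} [Countable ι] {α β : Type*} [MeasurableSpace α]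
    [MeasurableSpace β] {μ : MeasureTheory.Measure α} {f : ι → α → β}
    (hf : ∀ i, AEMeasurable (f i) μ) : AEMeasurable (fun x i => f i x) μ :=
  ⟨fun x i => (hf i).mk _ x, measurable_pi_lambda _ fun i => (hf i).measurable_mk, by
    filter_upwards [ae_all_iff.mpr fun i => (hf i).ae_eq_mk] with x hx
    funext i
    exact hx i⟩

lemma ext_bcf {X : Type*} [MeasurableSpace X] [TopologicalSpace X]
    [TopologicalSpace.PseudoMetrizableSpace X] [BorelSpace X] {μ ν : Measure X}
    [IsFiniteMeasure μ] [IsFiniteMeasure ν]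
    (h : ∀ f : X →ᵇ ℝ, ∫ x, f x ∂μ = ∫ x, f x ∂ν) : μ = ν := by
  apply MeasureTheory.ext_of_forall_lintegral_eq_of_IsFiniteMeasure
  intro f
  have h1 : (∫⁻ x, f x ∂μ).toReal = (∫⁻ x, f x ∂ν).toReal := by
    rw [BoundedContinuousFunction.toReal_lintegral_coe_eq_integral,
      BoundedContinuousFunction.toReal_lintegral_coe_eq_integral]
    have := h (BCFreal f)
    simpa [BCFreal, BoundedContinuousFunction.coe_ofNormedAddCommGroup] using this
  exact (ENNReal.toReal_eq_toReal_iff' (f.lintegral_lt_top_of_nnreal μ).ne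
    (f.lintegral_lt_top_of_nnreal ν).ne).mp h1

theorem involution_duality {d N : ℕ} (hN : 1 ≤ N) (Ω : Set (Euc d))
    (hΩo : IsOpen Ω) (hΩn : Ω.Nonempty) (hΩb : Bornology.IsBounded Ω)
    (hΩconn : IsConnected Ω)
    (μ : Measure (Euc d)) [IsProbabilityMeasure μ] (hμΩ : μ Ωᶜ = 0)
    (S : Fin (N + 1) → Euc d → Euc d) (hS0 : S 0 = id)
    (hSmeas : ∀ i, AEMeasurable (S i) μ)
    (hSΩ : ∀ i, ∀ x ∈ Ω, S i x ∈ Ω) :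
    (∀ H : (Fin (N + 1) → Euc d) → ℝ, memHN Ω H →
        ∫ x, H (fun i => S i x) ∂μ = 0) ↔
      (∃ T : Euc d → Euc d, Measurable T ∧ (∀ x ∈ Ω, T x ∈ Ω) ∧ μ.map T = μ ∧
        (∀ᵐ x ∂μ, T^[N + 1] x = x) ∧
        ∀ i : Fin (N + 1), ∀ᵐ x ∂μ, S i x = T^[i.1] x) := by
  have haeΩ : ∀ᵐ x ∂μ, x ∈ Ω := by
    rw [ae_iff]
    exact hμΩ
  have hv1 : (1 : Fin (N + 1)).val = 1 := by
    rw [Fin.val_one']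
    exact Nat.mod_eq_of_lt (by omega)
  constructor
  · intro hyp
    classical
    have Sext : ∀ (a b : ℕ) (ha : a < N + 1) (hb : b < N + 1), a = b →
        ∀ x, S ⟨a, ha⟩ x = S ⟨b, hb⟩ x := by
      intro a b ha hb h x
      subst h
      rfl
    set Φ : Euc d → (Fin (N + 1) → Euc d) := fun x i => S i x with hΦdef
    have hΦ : AEMeasurable Φ μ := aemeasurable_pi hSmeas
    haveI : IsProbabilityMeasure (μ.map Φ) := Measure.isProbabilityMeasure_map hΦ
    have hcycm : Measurable (cyc : (Fin (N + 1) → Euc d) → _) := cyc_measurable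
    -- Step 1: integral invariance for bounded continuous g
    have step1 : ∀ g : (Fin (N + 1) → Euc d) →ᵇ ℝ,
        ∫ x, g (cyc (Φ x)) ∂μ = ∫ x, g (Φ x) ∂μ := by
      intro g
      have hmem : memHN Ω (fun y => g y - g (cyc y)) := by
        constructor
        · exact (g.continuous.sub (g.continuous.comp cyc_continuous)).continuousOn
        · intro x _
          have hkey : ∀ i : Fin (N + 1), g (cyc (cyc^[i.1] x)) = g (cyc^[(i + 1).1] x) := by
            intro i
            rw [← Function.iterate_succ_apply' cyc i.1 x]
            have hval : (i + 1).1 = (i.1 + 1) % (N + 1) := by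
              rw [Fin.add_def, hv1]
            by_cases hi : i.1 + 1 = N + 1
            · have h1 : cyc^[i.1 + 1] x = x := by rw [hi]; exact cyc_iterate_self x
              have h2 : (i + 1).1 = 0 := by rw [hval, hi, Nat.mod_self]
              rw [h1, h2]
              simp
            · have h2 : (i + 1).1 = i.1 + 1 := by
                rw [hval]
                exact Nat.mod_eq_of_lt (by omega)
              rw [h2]
          simp only [hkey]
          rw [Finset.sum_sub_distrib]
          have heq : ∑ i : Fin (N + 1), g (cyc^[(i + 1).1] x)
              = ∑ i : Fin (N + 1), g (cyc^[i.1] x) :=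
            Fintype.sum_equiv (Equiv.addRight (1 : Fin (N + 1)))
              (fun i => g (cyc^[(i + 1).1] x)) (fun i => g (cyc^[i.1] x)) (fun i => rfl)
          rw [heq, sub_self]
      have h0 := hyp _ hmem
      have i1 : Integrable (fun x => g (Φ x)) μ :=
        (integrable_map_measure g.continuous.measurable.aestronglyMeasurable hΦ).mp
          (g.integrable _)
      have i2 : Integrable (fun x => g (cyc (Φ x))) μ := by
        haveI : IsProbabilityMeasure (μ.map (fun x => cyc (Φ x))) :=
          Measure.isProbabilityMeasure_map (hcycm.comp_aemeasurable hΦ)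
        exact (integrable_map_measure g.continuous.measurable.aestronglyMeasurable
          (hcycm.comp_aemeasurable hΦ)).mp (g.integrable _)
      have : ∫ x, (g (Φ x) - g (cyc (Φ x))) ∂μ = 0 := h0
      rw [integral_sub i1 i2] at this
      linarith
    -- Step 2: cyclic invariance of the law
    have step2 : ∀ k : ℕ, μ.map (fun x => cyc^[k] (Φ x)) = μ.map Φ := by
      intro k
      induction k with
      | zero => simp
      | succ k ih =>
        have hk : AEMeasurable (fun x => cyc^[k] (Φ x)) μ :=
          (hcycm.iterate k).comp_aemeasurable hΦ
        have e1 : μ.map (fun x => cyc^[k+1] (Φ x)) = μ.map (cyc ∘ fun x => cyc^[k] (Φ x)) := by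
          congr 1
          funext x
          exact Function.iterate_succ_apply' cyc k (Φ x)
        have e2 : μ.map (cyc ∘ fun x => cyc^[k] (Φ x))
            = Measure.map cyc (μ.map (fun x => cyc^[k] (Φ x))) :=
          (AEMeasurable.map_map_of_aemeasurable hcycm.aemeasurable hk).symm
        have e3 : Measure.map cyc (μ.map Φ) = μ.map (cyc ∘ Φ) :=
          AEMeasurable.map_map_of_aemeasurable hcycm.aemeasurable hΦ
        have e4 : μ.map (cyc ∘ Φ) = μ.map Φ := by
          apply ext_bcf
          intro f
          rw [integral_map (hcycm.comp_aemeasurable hΦ)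
            f.continuous.measurable.aestronglyMeasurable,
            integral_map hΦ f.continuous.measurable.aestronglyMeasurable]
          exact step1 f
        rw [e1, e2, ih, e3, e4]
    -- Construct T
    obtain ⟨x₀, hx₀⟩ := hΩn
    set T₀ : Euc d → Euc d := (hSmeas 1).mk (S 1) with hT₀def
    set T : Euc d → Euc d := fun x => if T₀ x ∈ Ω then T₀ x else x₀ with hTdef
    have hTm : Measurable T := by
      apply Measurable.ite _ (hSmeas 1).measurable_mk measurable_const
      exact (hSmeas 1).measurable_mk hΩo.measurableSet
    have hTΩ : ∀ x, T x ∈ Ω := by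
      intro x
      by_cases h : T₀ x ∈ Ω <;> simp [hTdef, h, hx₀]
    have hTS1 : T =ᵐ[μ] S 1 := by
      filter_upwards [haeΩ, (hSmeas 1).ae_eq_mk] with x hx hmk
      have h1 : T₀ x = S 1 x := hmk.symm
      have h2 : T₀ x ∈ Ω := by rw [h1]; exact hSΩ 1 x hx
      show (if T₀ x ∈ Ω then T₀ x else x₀) = S 1 x
      rw [if_pos h2, h1]
    -- map T = μ
    have hmapS1 : μ.map (S 1) = μ := by
      have e := step2 1
      have h01 := congrArg (fun ν : Measure (Fin (N + 1) → Euc d) =>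
        ν.map (fun y : Fin (N + 1) → Euc d => y 0)) e
      have hev : Measurable (fun y : Fin (N + 1) → Euc d => y 0) := measurable_pi_apply 0
      have h1m : AEMeasurable (fun x => cyc^[1] (Φ x)) μ :=
        (hcycm.iterate 1).comp_aemeasurable hΦ
      rw [AEMeasurable.map_map_of_aemeasurable hev.aemeasurable h1m,
        AEMeasurable.map_map_of_aemeasurable hev.aemeasurable hΦ] at h01
      have eL : ((fun y : Fin (N + 1) → Euc d => y 0) ∘ fun x => cyc^[1] (Φ x)) = S 1 := by
        funext x
        show (cyc^[1] (Φ x)) 0 = S 1 x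
        rw [cyc_iterate]
        have h1 : (1 : Fin (N + 1)) = ⟨1, by omega⟩ := Fin.ext hv1
        rw [h1]
        exact Sext _ _ _ _ (by simp [Nat.mod_eq_of_lt (show 1 < N + 1 by omega)]) x
      have eR : ((fun y : Fin (N + 1) → Euc d => y 0) ∘ Φ) = id := by
        funext x
        show S 0 x = x
        rw [hS0]
        rfl
      rw [eL, eR, Measure.map_id] at h01
      exact h01
    have hmapT : μ.map T = μ := by rw [Measure.map_congr hTS1, hmapS1]
    -- key estimate
    set g : (Fin (N + 1) → Euc d) → ℝ := fun y => min 1 (dist (y 1) (T (y 0))) with hgdef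
    have hgm : Measurable g :=
      measurable_const.min ((measurable_pi_apply 1).dist (hTm.comp (measurable_pi_apply 0)))
    have hg0 : ∀ y, 0 ≤ g y := fun y => le_min zero_le_one dist_nonneg
    have hg1 : ∀ y, g y ≤ 1 := fun y => min_le_left _ _
    have hint0 : ∫ x, g (Φ x) ∂μ = 0 := by
      have hz : (fun x => g (Φ x)) =ᵐ[μ] fun _ => 0 := by
        filter_upwards [hTS1] with x hx
        show min 1 (dist (Φ x 1) (T (Φ x 0))) = 0
        have e0 : Φ x 0 = x := by show S 0 x = x; rw [hS0]; rfl
        have e1 : Φ x 1 = S 1 x := rfl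
        rw [e0, e1, hx, dist_self]
        simp
      rw [integral_congr_ae hz, integral_zero]
    have key : ∀ k : ℕ, ∀ᵐ x ∂μ,
        S ⟨(1 + k) % (N + 1), Nat.mod_lt _ (by omega)⟩ x
          = T (S ⟨k % (N + 1), Nat.mod_lt _ (by omega)⟩ x) := by
      intro k
      have hk : AEMeasurable (fun x => cyc^[k] (Φ x)) μ :=
        (hcycm.iterate k).comp_aemeasurable hΦ
      have e1 : ∫ x, g (cyc^[k] (Φ x)) ∂μ = 0 := by
        rw [← integral_map hk hgm.aestronglyMeasurable, step2 k,
          integral_map hΦ hgm.aestronglyMeasurable]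
        exact hint0
      have hintegr : Integrable (fun x => g (cyc^[k] (Φ x))) μ := by
        refine ⟨(hgm.comp_aemeasurable hk).aestronglyMeasurable, ?_⟩
        apply HasFiniteIntegral.of_bounded (C := 1)
        filter_upwards with x
        rw [Real.norm_eq_abs, abs_of_nonneg (hg0 _)]
        exact hg1 _
      have hz := (integral_eq_zero_iff_of_nonneg_ae
        (Eventually.of_forall fun x => hg0 _) hintegr).mp e1
      filter_upwards [hz] with x hx
      have ea : (cyc^[k] (Φ x)) 1 = S ⟨(1 + k) % (N + 1), Nat.mod_lt _ (by omega)⟩ x := by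
        rw [cyc_iterate]
        exact Sext _ _ _ _ (by rw [hv1]) x
      have eb : (cyc^[k] (Φ x)) 0 = S ⟨k % (N + 1), Nat.mod_lt _ (by omega)⟩ x := by
        rw [cyc_iterate]
        exact Sext _ _ _ _ (by simp) x
      have hx' : min 1 (dist ((cyc^[k] (Φ x)) 1) (T ((cyc^[k] (Φ x)) 0))) = 0 := hx
      rw [ea, eb] at hx'
      set a := S ⟨(1 + k) % (N + 1), Nat.mod_lt _ (by omega)⟩ x
      set b := T (S ⟨k % (N + 1), Nat.mod_lt _ (by omega)⟩ x)
      have hd : dist a b = 0 := by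
        rcases le_or_gt 1 (dist a b) with h | h
        · rw [min_eq_left h] at hx'; norm_num at hx'
        · rwa [min_eq_right h.le] at hx'
      exact dist_eq_zero.mp hd
    -- induction claim
    have claim : ∀ k : ℕ, (hk : k ≤ N) → ∀ᵐ x ∂μ, S ⟨k, by omega⟩ x = T^[k] x := by
      intro k
      induction k with
      | zero =>
        intro _
        filter_upwards with x
        have h0 : (⟨0, by omega⟩ : Fin (N + 1)) = 0 := by
          apply Fin.ext
          simp
        rw [h0, hS0]
        rfl
      | succ k ih =>
        intro hk1
        filter_upwards [ih (by omega), key k] with x h1 h2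
        have ea : (⟨(1 + k) % (N + 1), Nat.mod_lt _ (by omega)⟩ : Fin (N + 1))
            = ⟨k + 1, by omega⟩ := by
          apply Fin.ext
          show (1 + k) % (N + 1) = k + 1
          rw [Nat.add_comm 1 k]
          exact Nat.mod_eq_of_lt (by omega)
        have eb : (⟨k % (N + 1), Nat.mod_lt _ (by omega)⟩ : Fin (N + 1))
            = ⟨k, by omega⟩ := by
          apply Fin.ext
          exact Nat.mod_eq_of_lt (by omega)
        rw [ea, eb] at h2
        rw [h2, h1, Function.iterate_succ_apply']
    -- N-involution
    have hTiter : ∀ᵐ x ∂μ, T^[N + 1] x = x := by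
      filter_upwards [claim N le_rfl, key N] with x h1 h2
      have ea : (⟨(1 + N) % (N + 1), Nat.mod_lt _ (by omega)⟩ : Fin (N + 1)) = 0 := by
        apply Fin.ext
        show (1 + N) % (N + 1) = (0 : Fin (N+1)).1
        simp [Nat.add_comm 1 N]
      have eb : (⟨N % (N + 1), Nat.mod_lt _ (by omega)⟩ : Fin (N + 1))
          = ⟨N, by omega⟩ := by
        apply Fin.ext
        exact Nat.mod_eq_of_lt (by omega)
      rw [ea, eb] at h2
      rw [hS0] at h2
      rw [Function.iterate_succ_apply', ← h1, ← h2]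
      rfl
    refine ⟨T, hTm, fun x _ => hTΩ x, hmapT, hTiter, ?_⟩
    intro i
    have := claim i.1 (by omega)
    have he : (⟨i.1, by omega⟩ : Fin (N + 1)) = i := Fin.eta i i.isLt
    rwa [he] at this
  · rintro ⟨T, hTm, hTΩ, hmapT, hTit, hTS⟩ H hH
    have hTΩit : ∀ x ∈ Ω, ∀ k : ℕ, T^[k] x ∈ Ω := by
      intro x hx k
      induction k with
      | zero => exact hx
      | succ k ih => rw [Function.iterate_succ_apply']; exact hTΩ _ ih
    set Ψ : Euc d → (Fin (N + 1) → Euc d) := fun x i => T^[i.1] x with hΨdef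
    have hΨm : Measurable Ψ := measurable_pi_lambda _ fun i => hTm.iterate i.1
    have hcycm : Measurable (cyc : (Fin (N + 1) → Euc d) → _) := cyc_measurable
    have hST : ∀ᵐ x ∂μ, ∀ i, S i x = T^[i.1] x := ae_all_iff.mpr hTS
    have hcong : (fun x => H (fun i => S i x)) =ᵐ[μ] fun x => H (Ψ x) := by
      filter_upwards [hST] with x hx
      show H (fun i => S i x) = H (Ψ x)
      congr 1
      funext i
      exact hx i
    rw [integral_congr_ae hcong]
    set ν : Measure (Fin (N + 1) → Euc d) := μ.map Ψ with hνdef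
    haveI : IsProbabilityMeasure ν := Measure.isProbabilityMeasure_map hΨm.aemeasurable
    have hUmeas : MeasurableSet {y : Fin (N + 1) → Euc d | ∀ i, y i ∈ Ω} := by
      have : {y : Fin (N + 1) → Euc d | ∀ i, y i ∈ Ω}
          = ⋂ i, (fun y : Fin (N + 1) → Euc d => y i) ⁻¹' Ω := by
        ext y
        simp
      rw [this]
      exact MeasurableSet.iInter fun i => (measurable_pi_apply i) hΩo.measurableSet
    have hνU : ∀ᵐ y ∂ν, ∀ i, y i ∈ Ω := by
      rw [hνdef, (ae_map_iff hΨm.aemeasurable hUmeas : _)]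
      filter_upwards [haeΩ] with x hx i
      exact hTΩit x hx i.1
    have hHm : AEStronglyMeasurable H ν := by
      have h1 : AEStronglyMeasurable H (ν.restrict {y | ∀ i, y i ∈ Ω}) :=
        hH.1.aestronglyMeasurable hUmeas
      have h2 : ν.restrict {y : Fin (N + 1) → Euc d | ∀ i, y i ∈ Ω} = ν :=
        Measure.restrict_eq_self_of_ae_mem hνU
      rwa [h2] at h1
    have hmapcyc : ν.map cyc = ν := by
      have hcomp : (cyc ∘ Ψ) =ᵐ[μ] fun x => Ψ (T x) := by
        filter_upwards [hTit] with x hx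
        funext i
        show Ψ x ⟨(i.1 + 1) % (N + 1), Nat.mod_lt _ i.pos⟩ = T^[i.1] (T x)
        rw [← Function.iterate_succ_apply]
        show T^[(i.1 + 1) % (N + 1)] x = T^[i.1 + 1] x
        by_cases hi : i.1 + 1 = N + 1
        · rw [hi, Nat.mod_self]
          exact hx.symm
        · rw [Nat.mod_eq_of_lt (by omega)]
      calc ν.map cyc = μ.map (cyc ∘ Ψ) := Measure.map_map hcycm hΨm
        _ = μ.map (fun x => Ψ (T x)) := Measure.map_congr hcomp
        _ = μ.map (Ψ ∘ T) := rfl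
        _ = (μ.map T).map Ψ := (Measure.map_map hΨm hTm).symm
        _ = ν := by rw [hmapT]
    have hmapcyck : ∀ k : ℕ, ν.map cyc^[k] = ν := by
      intro k
      induction k with
      | zero => simp
      | succ k ih =>
        have e1 : (cyc^[k+1] : (Fin (N + 1) → Euc d) → _) = cyc ∘ cyc^[k] :=
          Function.iterate_succ' cyc k
        rw [e1, ← Measure.map_map hcycm (hcycm.iterate k), ih, hmapcyc]
    rw [← integral_map hΨm.aemeasurable hHm]
    by_cases hint : Integrable H ν
    · have hsum : ∀ᵐ y ∂ν, ∑ i : Fin (N + 1), H (cyc^[i.1] y) = 0 := by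
        filter_upwards [hνU] with y hy
        exact hH.2 y hy
      have hHmk : ∀ k : ℕ, AEStronglyMeasurable H (ν.map cyc^[k]) := by
        intro k
        rw [hmapcyck k]
        exact hHm
      have hHk : ∀ k : ℕ, Integrable (fun y => H (cyc^[k] y)) ν := by
        intro k
        exact (integrable_map_measure (hHmk k) (hcycm.iterate k).aemeasurable).mp
          (by rwa [hmapcyck k])
      have hintk : ∀ k : ℕ, ∫ y, H (cyc^[k] y) ∂ν = ∫ y, H y ∂ν := by
        intro k
        rw [← integral_map (hcycm.iterate k).aemeasurable (hHmk k), hmapcyck k]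
      have hsum0 : (fun y => ∑ i : Fin (N + 1), H (cyc^[i.1] y)) =ᵐ[ν] (fun _ => 0) := hsum
      have h1 : ∫ y, (∑ i : Fin (N + 1), H (cyc^[i.1] y)) ∂ν = 0 := by
        rw [integral_congr_ae hsum0, integral_zero]
      rw [integral_finset_sum _ (fun i _ => hHk i.1)] at h1
      simp only [hintk] at h1
      rw [Finset.sum_const, Finset.card_univ, Fintype.card_fin, nsmul_eq_mul] at h1
      have hne : ((N : ℝ) + 1) ≠ 0 := by positivity
      have : ((N : ℝ) + 1) * ∫ y, H y ∂ν = 0 := by exact_mod_cast h1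
      exact (mul_eq_zero.mp this).resolve_left hne
    · exact integral_undef hint
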